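/- Let X be a (75,32,10,16) strongly regular graph with a 4-clique K whose outside-degree distribution is (b_0,b_1,b_2,b_3)=(0,29,39,3) with b_4=0, and let x be one of the three vertices with 3 neighbors in K. If the three vertices with 3 neighbors in K form an independent set, then x has exactly 21 neighbors among the vertices with 1 neighbor in K and exactly 8 neighbors among the vertices with 2 neighbors in K. -/

import Mathlib

open Finset

/-- The number of neighbors of `x` inside the vertex set `K`. -/
def nbrs {V : Type*} [DecidableEq V] (G : SimpleGraph V) [DecidableRel G.Adj]
    (K : Finset V) (x : V) : ℕ :=
  (K.filter (fun y => G.Adj x y)).card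

/-- The number of vertices outside `K` with exactly `i` neighbors in `K`. -/
def bcount {V : Type*} [Fintype V] [DecidableEq V] (G : SimpleGraph V) [DecidableRel G.Adj]
    (K : Finset V) (i : ℕ) : ℕ :=
  ((univ \ K).filter (fun x => nbrs G K x = i)).card

/-!
Let `S` be the set of the 29 neighbours of `x` outside `K`. Counting pairs `(y, k)` with
`y ∈ S`, `k ∈ K` adjacent in two ways: each of the three neighbours `k ∈ K` of `x` has
`λ = 10` common neighbours with `x`, two of them in `K`, so 8 in `S`; the non-neighbour
`k ∈ K` has `μ = 16` common neighbours with `x`, three of them in `K`, so 13 in `S`. Hence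
the vertices of `S` have `3 * 8 + 13 = 37` neighbours in `K` in total. Since `b₀ = b₄ = 0` and
the vertices with 3 neighbours in `K` are pairwise non-adjacent, every `y ∈ S` has 1 or 2
neighbours in `K`, so `n₁ + n₂ = 29` and `n₁ + 2 n₂ = 37`, i.e. `n₁ = 21`, `n₂ = 8`.
-/

lemma Finset.card_filter_eq_one_add_card_filter_eq_two {α : Type*} (S : Finset α) (f : α → ℕ)
    (hf : ∀ y ∈ S, f y = 1 ∨ f y = 2) :
    #(S.filter (f · = 1)) + #(S.filter (f · = 2)) = #S ∧
      #(S.filter (f · = 1)) + 2 * #(S.filter (f · = 2)) = ∑ y ∈ S, f y := by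
  have hmaps : (S : Set α).MapsTo f ({1, 2} : Finset ℕ) := fun y hy => by
    simpa using hf y hy
  constructor
  · simp [card_eq_sum_card_fiberwise hmaps]
  · have hfiber (i : ℕ) : ∑ y ∈ S.filter (f · = i), f y = #(S.filter (f · = i)) * i :=
      sum_const_nat fun _ hy => (mem_filter.mp hy).2
    simp [← sum_fiberwise_of_maps_to hmaps, hfiber, mul_comm]

namespace SimpleGraph

variable {V : Type*} [DecidableEq V] {G : SimpleGraph V} [DecidableRel G.Adj]
  {K : Finset V} {x k : V}

lemma nbrs_le_card (K : Finset V) (x : V) : nbrs G K x ≤ #K := card_filter_le _ _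

lemma sum_nbrs_eq_sum_card_filter_adj (S K : Finset V) :
    ∑ y ∈ S, nbrs G K y = ∑ k ∈ K, #(S.filter (G.Adj · k)) := by
  simp only [nbrs, card_filter]
  exact sum_comm

variable [Fintype V]

lemma card_commonNeighbors_eq_card_inter (v w : V) :
    Fintype.card (G.commonNeighbors v w) = #(G.neighborFinset v ∩ G.neighborFinset w) := by
  rw [← Set.toFinset_card]
  congr 1
  ext y
  simp [mem_commonNeighbors]

lemma nbrs_eq_card_inter (K : Finset V) (x : V) : nbrs G K x = #(G.neighborFinset x ∩ K) := by
  unfold nbrs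
  congr 1
  ext y
  simp [and_comm]

lemma nbrs_ne_of_bcount_eq_zero {i : ℕ} (h : bcount G K i = 0) {y : V} (hy : y ∉ K) :
    nbrs G K y ≠ i := fun hi => by
  simp only [bcount, card_eq_zero, filter_eq_empty_iff, mem_sdiff, mem_univ, true_and] at h
  exact h hy hi

lemma card_neighborFinset_sdiff_add_nbrs (K : Finset V) (x : V) :
    #(G.neighborFinset x \ K) + nbrs G K x = G.degree x := by
  rw [nbrs_eq_card_inter, card_sdiff_add_card_inter, card_neighborFinset_eq_degree]

lemma filter_sdiff_and_adj (K : Finset V) (x : V) (p : V → Prop) [DecidablePred p] :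
    (univ \ K).filter (fun y => p y ∧ G.Adj x y) = (G.neighborFinset x \ K).filter p := by
  ext y
  simp only [mem_filter, mem_sdiff, mem_univ, true_and, mem_neighborFinset]
  tauto

lemma IsClique.neighborFinset_inter_eq_erase (hK : G.IsClique (K : Set V)) (hk : k ∈ K) :
    G.neighborFinset k ∩ K = K.erase k := by
  ext y
  simp only [mem_inter, mem_neighborFinset, mem_erase]
  exact ⟨fun ⟨hky, hy⟩ => ⟨hky.ne.symm, hy⟩, fun ⟨hyk, hy⟩ => ⟨hK hk hy hyk.symm, hy⟩⟩

/-- The common neighbours of `x` and `k` inside the clique `K` are the neighbours of `x` in `K`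
other than `k`. -/
lemma IsClique.card_filter_adj_add_nbrs (hK : G.IsClique (K : Set V)) (hk : k ∈ K) (x : V) :
    #((G.neighborFinset x \ K).filter (G.Adj · k)) + nbrs G K x =
      Fintype.card (G.commonNeighbors x k) + if G.Adj x k then 1 else 0 := by
  have houtside : (G.neighborFinset x \ K).filter (G.Adj · k) =
      (G.neighborFinset x ∩ G.neighborFinset k) \ K := by
    ext y
    simp only [mem_filter, mem_sdiff, mem_inter, mem_neighborFinset]
    exact ⟨fun ⟨⟨hxy, hy⟩, hyk⟩ => ⟨⟨hxy, hyk.symm⟩, hy⟩,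
      fun ⟨⟨hxy, hky⟩, hy⟩ => ⟨⟨hxy, hy⟩, hky.symm⟩⟩
  have hinside : G.neighborFinset x ∩ G.neighborFinset k ∩ K =
      (G.neighborFinset x ∩ K).erase k := by
    rw [inter_assoc, hK.neighborFinset_inter_eq_erase hk, inter_erase]
  rw [houtside, card_commonNeighbors_eq_card_inter,
    ← card_sdiff_add_card_inter (G.neighborFinset x ∩ G.neighborFinset k) K, hinside,
    nbrs_eq_card_inter, add_assoc]
  congr 1
  split_ifs with hxk
  · exact (card_erase_add_one (by simpa [hk] using hxk)).symm
  · rw [erase_eq_of_notMem (by simpa [hk] using hxk), add_zero]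

lemma IsSRGWith.sum_nbrs_neighborFinset_sdiff_add {n d ℓ μ : ℕ} (hG : G.IsSRGWith n d ℓ μ)
    (hK : G.IsClique (K : Set V)) (hxK : x ∉ K) :
    ∑ y ∈ G.neighborFinset x \ K, nbrs G K y + #K * nbrs G K x =
      nbrs G K x * (ℓ + 1) + (#K - nbrs G K x) * μ := by
  have hterm : ∀ k ∈ K, #((G.neighborFinset x \ K).filter (G.Adj · k)) + nbrs G K x =
      if G.Adj x k then ℓ + 1 else μ := fun k hk => by
    rw [hK.card_filter_adj_add_nbrs hk]
    split_ifs with hxk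
    · rw [hG.of_adj x k hxk]
    · rw [hG.of_not_adj (ne_of_mem_of_not_mem hk hxK).symm hxk, add_zero]
  have hnonadj : #(K.filter (¬G.Adj x ·)) = #K - nbrs G K x := by
    have := card_filter_add_card_filter_not (s := K) (G.Adj x ·)
    rw [nbrs]
    omega
  rw [sum_nbrs_eq_sum_card_filter_adj, ← smul_eq_mul, ← sum_const, ← sum_add_distrib,
    sum_congr rfl hterm, sum_ite, sum_const, sum_const, hnonadj, smul_eq_mul, smul_eq_mul, nbrs]

end SimpleGraph

open SimpleGraph in
theorem stmt9_general {V : Type*} [Fintype V] [DecidableEq V]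
    (G : SimpleGraph V) [DecidableRel G.Adj]
    (hG : G.IsSRGWith 75 32 10 16)
    (K : Finset V) (hK : G.IsNClique 4 K)
    (hb0 : bcount G K 0 = 0) (hb4 : bcount G K 4 = 0)
    (hind : ∀ a ∈ (univ \ K).filter (fun y => nbrs G K y = 3),
            ∀ b ∈ (univ \ K).filter (fun y => nbrs G K y = 3), ¬ G.Adj a b)
    (x : V) (hxK : x ∉ K) (hx : nbrs G K x = 3) :
    ((univ \ K).filter (fun y => nbrs G K y = 1 ∧ G.Adj x y)).card = 21 ∧
    ((univ \ K).filter (fun y => nbrs G K y = 2 ∧ G.Adj x y)).card = 8 := by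
  have hS : #(G.neighborFinset x \ K) = 29 := by
    have := card_neighborFinset_sdiff_add_nbrs (G := G) K x
    rw [hG.regular.degree_eq, hx] at this
    omega
  have hsum : ∑ y ∈ G.neighborFinset x \ K, nbrs G K y = 37 := by
    have := hG.sum_nbrs_neighborFinset_sdiff_add hK.isClique hxK
    rw [hK.card_eq, hx] at this
    omega
  have hval : ∀ y ∈ G.neighborFinset x \ K, nbrs G K y = 1 ∨ nbrs G K y = 2 := by
    intro y hy
    obtain ⟨hxy, hyK⟩ : G.Adj x y ∧ y ∉ K := by simpa using hy
    have h3 : nbrs G K y ≠ 3 := fun h3 => hind x (by simp [hxK, hx]) y (by simp [hyK, h3]) hxy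
    have := hK.card_eq ▸ nbrs_le_card (G := G) K y
    have := nbrs_ne_of_bcount_eq_zero hb0 hyK
    have := nbrs_ne_of_bcount_eq_zero hb4 hyK
    omega
  obtain ⟨hcard, hweight⟩ := card_filter_eq_one_add_card_filter_eq_two _ _ hval
  rw [filter_sdiff_and_adj, filter_sdiff_and_adj]
  omega

/-- Case (0,29,39,3): if the three vertices with 3 neighbors in the 4-clique `K`
form an independent set, then each of them has exactly 21 neighbors among the
1-neighbor vertices and exactly 8 among the 2-neighbor vertices. -/
theorem stmt9 {V : Type*} [Fintype V] [DecidableEq V]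
    (G : SimpleGraph V) [DecidableRel G.Adj]
    (hG : G.IsSRGWith 75 32 10 16)
    (K : Finset V) (hK : G.IsNClique 4 K)
    (hb0 : bcount G K 0 = 0) (hb1 : bcount G K 1 = 29)
    (hb2 : bcount G K 2 = 39) (hb3 : bcount G K 3 = 3) (hb4 : bcount G K 4 = 0)
    (hind : ∀ a ∈ (univ \ K).filter (fun y => nbrs G K y = 3),
            ∀ b ∈ (univ \ K).filter (fun y => nbrs G K y = 3), ¬ G.Adj a b)
    (x : V) (hxK : x ∉ K) (hx : nbrs G K x = 3) :
    ((univ \ K).filter (fun y => nbrs G K y = 1 ∧ G.Adj x y)).card = 21 ∧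
    ((univ \ K).filter (fun y => nbrs G K y = 2 ∧ G.Adj x y)).card = 8 :=
  stmt9_general G hG K hK hb0 hb4 hind x hxK hx
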